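/- arXiv:2003.06488 — 4 statements merged into one kernel-verified Lean document; each statement's English description precedes it below -/
import Mathlib

section
/- Rule determinism: Let R be a patch graph rewrite system (all rules have simple left patch types), and let G = C ·_J P_L. If a single rule (P_L, T_L) →^τ (P_R, T_R) ∈ R^≈ derives both rewrite steps G →_R C ·_{J'} P_R = G' and G →_R C ·_{J''} P_R = G'', then G' ≈ G''. -/
namespace PGR

structure Graph (V E L : Type) where
  Vs : Set V
  Es : Set E
  finV : Vs.Finite
  finE : Es.Finite
  src : E → V
  tgt : E → V
  lab : E → L

variable {V E L : Type}

/-- Well-formedness: every edge's endpoints lie in the vertex set. -/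
def Graph.WF (G : Graph V E L) : Prop :=
  ∀ e ∈ G.Es, G.src e ∈ G.Vs ∧ G.tgt e ∈ G.Vs

/-- A graph is simple if edges are determined by source, target and label. -/
def Graph.Simple (G : Graph V E L) : Prop :=
  ∀ e ∈ G.Es, ∀ e' ∈ G.Es,
    G.src e = G.src e' → G.tgt e = G.tgt e' → G.lab e = G.lab e' → e = e'

/-- Disjointness of graphs (vertex and edge sets). -/
def Disj {L₁ L₂ : Type} (G : Graph V E L₁) (H : Graph V E L₂) : Prop :=
  G.Vs ∩ H.Vs = ∅ ∧ G.Es ∩ H.Es = ∅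

/-- J is a patch for context graph C and match graph M. -/
def IsPatch {L₁ L₂ L₃ : Type} (C : Graph V E L₁) (M : Graph V E L₂)
    (J : Graph V E L₃) : Prop :=
  J.Es ∩ (C.Es ∪ M.Es) = ∅ ∧
  J.Vs = J.src '' J.Es ∪ J.tgt '' J.Es ∧
  ∀ e ∈ J.Es,
    (J.src e ∈ C.Vs ∧ J.tgt e ∈ M.Vs) ∨
    (J.src e ∈ M.Vs ∧ J.tgt e ∈ C.Vs) ∨
    (J.src e ∈ M.Vs ∧ J.tgt e ∈ M.Vs)

/-- The trivial one-node graph on the context node □ (here `sq`). -/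
def trivialGraph (E : Type) (sq : V) : Graph V E Unit where
  Vs := {sq}
  Es := ∅
  finV := Set.finite_singleton _
  finE := Set.finite_empty
  src := fun _ => sq
  tgt := fun _ => sq
  lab := fun _ => ()

/-- T is a patch type for M with context node `sq` (= □). -/
def IsPatchType {L₂ : Type} (sq : V) (M : Graph V E L₂) (T : Graph V E Unit) : Prop :=
  sq ∉ M.Vs ∧ IsPatch (trivialGraph E sq) M T

open Classical in
/-- Graph union (intended for graphs with disjoint edge sets). -/
noncomputable def Graph.union (G H : Graph V E L) : Graph V E L where
  Vs := G.Vs ∪ H.Vs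
  Es := G.Es ∪ H.Es
  finV := G.finV.union H.finV
  finE := G.finE.union H.finE
  src := fun e => if e ∈ G.Es then G.src e else H.src e
  tgt := fun e => if e ∈ G.Es then G.tgt e else H.tgt e
  lab := fun e => if e ∈ G.Es then G.lab e else H.lab e

/-- Patch composition C ·_J M = C ∪ J ∪ M. -/
noncomputable def comp (C J M : Graph V E L) : Graph V E L :=
  (C.union J).union M

/-- Equality of graphs (functions compared on the edge set only). -/
def Graph.Eq (G H : Graph V E L) : Prop :=
  G.Vs = H.Vs ∧ G.Es = H.Es ∧
  ∀ e ∈ G.Es, G.src e = H.src e ∧ G.tgt e = H.tgt e ∧ G.lab e = H.lab e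

/-- A graph renaming: bijections on vertices and edges. -/
structure Renaming (V E : Type) where
  rV : V ≃ V
  rE : E ≃ E

/-- The φ-renaming of a graph. -/
def Renaming.apply (φ : Renaming V E) (G : Graph V E L) : Graph V E L where
  Vs := φ.rV '' G.Vs
  Es := φ.rE '' G.Es
  finV := G.finV.image _
  finE := G.finE.image _
  src := fun e => φ.rV (G.src (φ.rE.symm e))
  tgt := fun e => φ.rV (G.tgt (φ.rE.symm e))
  lab := fun e => G.lab (φ.rE.symm e)

/-- Graph isomorphism: existence of a renaming φ with φ(G) = H. -/
def Iso (G H : Graph V E L) : Prop :=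
  ∃ φ : Renaming V E, (φ.apply G).Eq H

/-- Patch edge j adheres to patch type edge t. -/
def AdheresEdge {L₁ L₂ L₃ : Type} (sq : V) (C : Graph V E L₁) (M : Graph V E L₂)
    (J : Graph V E L₃) (T : Graph V E Unit) (j t : E) : Prop :=
  (J.src j ∈ C.Vs → T.src t = sq) ∧
  (J.src j ∈ M.Vs → T.src t = J.src j) ∧
  (J.tgt j ∈ C.Vs → T.tgt t = sq) ∧
  (J.tgt j ∈ M.Vs → T.tgt t = J.tgt j)

/-- h is an adherence map from patch J to patch type T. -/
def AdherenceMap {L₁ L₂ L₃ : Type} (sq : V) (C : Graph V E L₁) (M : Graph V E L₂)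
    (J : Graph V E L₃) (T : Graph V E Unit) (h : E → E) : Prop :=
  ∀ j ∈ J.Es, h j ∈ T.Es ∧ AdheresEdge sq C M J T j (h j)

open Classical in
/-- cxt_h(e): the context node involved in patch edge e, if any. -/
noncomputable def cxt {L₃ : Type} (sq : V) (J : Graph V E L₃) (T : Graph V E Unit)
    (h : E → E) (e : E) : Set V :=
  if T.src (h e) = sq then {J.src e}
  else if T.tgt (h e) = sq then {J.tgt e}
  else ∅

/-- A (quasi) patch graph rewrite rule: two schemes and a trace function. -/
structure Rule (V E L : Type) where
  PL : Graph V E L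
  TL : Graph V E Unit
  PR : Graph V E L
  TR : Graph V E Unit
  tr : E → E

/-- Well-formedness of a quasi rule, including the trace condition. -/
def Rule.WF (sq : V) (r : Rule V E L) : Prop :=
  IsPatchType sq r.PL r.TL ∧ IsPatchType sq r.PR r.TR ∧
  ∀ e ∈ r.TR.Es, r.tr e ∈ r.TL.Es ∧
    ((r.TR.src e = sq ∨ r.TR.tgt e = sq) →
      (r.TL.src (r.tr e) = sq ∨ r.TL.tgt (r.tr e) = sq))

/-- Rule isomorphism: a renaming fixing □ relating the schemes and commuting with the traces. -/
def Rule.Iso (sq : V) (r r' : Rule V E L) : Prop :=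
  ∃ φ : Renaming V E, φ.rV sq = sq ∧
    (φ.apply r.PL).Eq r'.PL ∧ (φ.apply r.TL).Eq r'.TL ∧
    (φ.apply r.PR).Eq r'.PR ∧ (φ.apply r.TR).Eq r'.TR ∧
    ∀ e ∈ r.TR.Es, φ.rE (r.tr e) = r'.tr (φ.rE e)

/-- Preimage of t under h inside the edge set S. -/
def preim (S : Set E) (h : E → E) (t : E) : Set E := {e | e ∈ S ∧ h e = t}

/-- Condition (iv) of the rewrite relation: fiberwise bijections preserving labels
and with cxt containment. -/
def BijCond (sq : V) (r : Rule V E L) (J J' : Graph V E L) (hL hR : E → E) : Prop :=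
  ∀ t ∈ r.TR.Es, ∃ σ : E → E,
    Set.BijOn σ (preim J'.Es hR t) (preim J.Es hL (r.tr t)) ∧
    ∀ e ∈ preim J'.Es hR t,
      J'.lab e = J.lab (σ e) ∧ cxt sq J' r.TR hR e ⊆ cxt sq J r.TL hL (σ e)

/-- A rewrite step via a fixed rule r, with context C, left patch J and right patch J'. -/
def StepVia (sq : V) (r : Rule V E L) (C J J' : Graph V E L) : Prop :=
  ∃ hL hR : E → E,
    Disj C r.PL ∧ IsPatch C r.PL J ∧
    Disj C r.PR ∧ IsPatch C r.PR J' ∧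
    AdherenceMap sq C r.PL J r.TL hL ∧
    AdherenceMap sq C r.PR J' r.TR hR ∧
    BijCond sq r J J' hL hR

/-- The rewrite relation induced by a (quasi) patch graph rewrite system R. -/
def Step (sq : V) (R : Set (Rule V E L)) (G H : Graph V E L) : Prop :=
  ∃ r₀ ∈ R, ∃ r : Rule V E L, Rule.Iso sq r₀ r ∧
    ∃ C J J' : Graph V E L, StepVia sq r C J J' ∧
      G.Eq (comp C J r.PL) ∧ H.Eq (comp C J' r.PR)

/-- Subgraph relation. -/
def Subgraph (M G : Graph V E L) : Prop :=
  M.Vs ⊆ G.Vs ∧ M.Es ⊆ G.Es ∧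
  ∀ e ∈ M.Es, M.src e = G.src e ∧ M.tgt e = G.tgt e ∧ M.lab e = G.lab e

/-!
Because `T_L` is simple, a patch edge adheres to at most one edge of `T_L`, so both steps use
the same left adherence map on `J`. Composing the fibre bijections of condition (iv) for the
first step with the inverses of those for the second gives a bijection `J₁ → J₂` over the same
edges of `T_R`. It preserves labels (both sides copy the label of the same edge of `J`),
endpoints in `P_R` (adherence fixes them), and endpoints in the context: such an endpoint is the
unique element of the `cxt` of the common edge of `J`. Extending this bijection by the identity
on the edges of `C` and `P_R` gives the isomorphism.
-/

open Set

theorem _root_.Set.exists_bijOn_of_fiberwise_bijOn {α β γ : Type*} {A₁ A₂ : Set α} {B : Set β}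
    {f₁ f₂ : α → β} {F : β → Set γ} {σ₁ σ₂ : β → α → γ}
    (hf₁ : MapsTo f₁ A₁ B) (hf₂ : MapsTo f₂ A₂ B)
    (hσ₁ : ∀ t ∈ B, BijOn (σ₁ t) {a ∈ A₁ | f₁ a = t} (F t))
    (hσ₂ : ∀ t ∈ B, BijOn (σ₂ t) {a ∈ A₂ | f₂ a = t} (F t)) :
    ∃ τ : α → α, BijOn τ A₁ A₂ ∧
      ∀ a ∈ A₁, f₂ (τ a) = f₁ a ∧ σ₂ (f₁ a) (τ a) = σ₁ (f₁ a) a := by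
  have hlift : ∀ a ∈ A₁, ∃ c ∈ {c ∈ A₂ | f₂ c = f₁ a}, σ₂ (f₁ a) c = σ₁ (f₁ a) a :=
    fun a ha => (hσ₂ _ (hf₁ ha)).surjOn ((hσ₁ _ (hf₁ ha)).mapsTo ⟨ha, rfl⟩)
  choose! τ hτ hστ using hlift
  refine ⟨τ, ⟨fun a ha => (hτ a ha).1, fun a ha b hb hab => ?_, fun c hc => ?_⟩,
    fun a ha => ⟨(hτ a ha).2, hστ a ha⟩⟩
  · have hf : f₁ a = f₁ b := by rw [← (hτ a ha).2, ← (hτ b hb).2, hab]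
    refine (hσ₁ _ (hf₁ ha)).injOn ⟨ha, rfl⟩ ⟨hb, hf.symm⟩ ?_
    rw [← hστ a ha, hf, ← hστ b hb, hab]
  · obtain ⟨a, ⟨ha, hfa⟩, hσa⟩ :=
      (hσ₁ _ (hf₂ hc)).surjOn ((hσ₂ _ (hf₂ hc)).mapsTo ⟨hc, rfl⟩)
    refine ⟨a, ha, (hσ₂ _ (hf₂ hc)).injOn ⟨(hτ a ha).1, ?_⟩ ⟨hc, rfl⟩ ?_⟩
    · rw [(hτ a ha).2, hfa]
    · rw [← hσa, ← hfa, hστ a ha]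

theorem _root_.Set.BijOn.exists_perm_eqOn {α : Type*} {s t K : Set α} {τ : α → α}
    (hτ : BijOn τ s t) (hs : s.Finite) (hK : K.Finite)
    (hsK : Disjoint s K) (htK : Disjoint t K) :
    ∃ π : Equiv.Perm α, EqOn π τ s ∧ EqOn π id K := by
  classical
  have hg : InjOn (s.piecewise τ id) (s ∪ K) := by
    have hτs := s.piecewise_eqOn τ id
    have hidK := (s.piecewise_eqOn_compl τ id).mono hsK.subset_compl_left
    refine (injOn_union hsK).2 ⟨hτ.injOn.congr hτs.symm, (injOn_id K).congr hidK.symm,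
      fun x hx y hy hxy => htK.ne_of_mem (hτ.mapsTo hx) hy ?_⟩
    rwa [hτs hx, hidK hy] at hxy
  have : Finite ↥(s ∪ K) := (hs.union hK).to_subtype
  obtain ⟨π, hπ⟩ := Equiv.Perm.exists_extending_pair _ _ Subtype.val_injective hg.injective
  refine ⟨π, fun x hx => ?_, fun x hx => ?_⟩
  · exact (hπ ⟨x, .inl hx⟩).trans (s.piecewise_eqOn τ id hx)
  · exact (hπ ⟨x, .inr hx⟩).trans (s.piecewise_eqOn_compl τ id (hsK.subset_compl_left hx))

section Patches

variable {L₁ L₂ L₃ : Type} {sq : V} {C : Graph V E L₁} {M : Graph V E L₂}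
  {J : Graph V E L₃} {T : Graph V E Unit} {h : E → E} {e : E}

theorem IsPatch.vs_subset (hp : IsPatch C M J) : J.Vs ⊆ C.Vs ∪ M.Vs := by
  rw [hp.2.1]
  rintro v (⟨e, he, rfl⟩ | ⟨e, he, rfl⟩) <;>
    rcases hp.2.2 e he with ⟨h₁, h₂⟩ | ⟨h₁, h₂⟩ | ⟨h₁, h₂⟩ <;> simp [h₁, h₂]

theorem IsPatchType.src_ne_or_tgt_ne (hT : IsPatchType sq M T) {t : E} (ht : t ∈ T.Es) :
    T.src t ≠ sq ∨ T.tgt t ≠ sq := by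
  have hM : ∀ v ∈ M.Vs, v ≠ sq := fun v hv hvsq => hT.1 (hvsq ▸ hv)
  rcases hT.2.2.2 t ht with ⟨-, h₂⟩ | ⟨h₁, -⟩ | ⟨h₁, -⟩
  exacts [.inr (hM _ h₂), .inl (hM _ h₁), .inl (hM _ h₁)]

theorem AdherenceMap.src_eq_of_ne (hp : IsPatch C M J) (ha : AdherenceMap sq C M J T h)
    (he : e ∈ J.Es) (hs : T.src (h e) ≠ sq) : J.src e = T.src (h e) := by
  obtain ⟨-, hC, hM, -, -⟩ := ha e he
  rcases hp.2.2 e he with ⟨h₁, -⟩ | ⟨h₁, -⟩ | ⟨h₁, -⟩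
  exacts [absurd (hC h₁) hs, (hM h₁).symm, (hM h₁).symm]

theorem AdherenceMap.tgt_eq_of_ne (hp : IsPatch C M J) (ha : AdherenceMap sq C M J T h)
    (he : e ∈ J.Es) (ht : T.tgt (h e) ≠ sq) : J.tgt e = T.tgt (h e) := by
  obtain ⟨-, -, -, hC, hM⟩ := ha e he
  rcases hp.2.2 e he with ⟨-, h₂⟩ | ⟨-, h₂⟩ | ⟨-, h₂⟩
  exacts [(hM h₂).symm, absurd (hC h₂) ht, (hM h₂).symm]

theorem AdherenceMap.eqOn_of_simple {h' : E → E} (hp : IsPatch C M J) (hT : T.Simple)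
    (ha : AdherenceMap sq C M J T h) (ha' : AdherenceMap sq C M J T h') : EqOn h h' J.Es := by
  intro j hj
  obtain ⟨hmem, hsC, hsM, htC, htM⟩ := ha j hj
  obtain ⟨hmem', hsC', hsM', htC', htM'⟩ := ha' j hj
  refine hT _ hmem _ hmem' ?_ ?_ rfl
  · rcases hp.2.2 j hj with ⟨h₁, -⟩ | ⟨h₁, -⟩ | ⟨h₁, -⟩
    exacts [(hsC h₁).trans (hsC' h₁).symm, (hsM h₁).trans (hsM' h₁).symm,
      (hsM h₁).trans (hsM' h₁).symm]
  · rcases hp.2.2 j hj with ⟨-, h₂⟩ | ⟨-, h₂⟩ | ⟨-, h₂⟩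
    exacts [(htM h₂).trans (htM' h₂).symm, (htC h₂).trans (htC' h₂).symm,
      (htM h₂).trans (htM' h₂).symm]

theorem cxt_subsingleton : (cxt sq J T h e).Subsingleton := by
  unfold cxt
  split_ifs
  exacts [subsingleton_singleton, subsingleton_singleton, subsingleton_empty]

theorem endpoints_eq_of_cxt_subset {J₁ J₂ : Graph V E L₃} {h₁ h₂ : E → E} {e₁ e₂ : E}
    {S : Set V} (hT : IsPatchType sq M T) (hp₁ : IsPatch C M J₁) (hp₂ : IsPatch C M J₂)
    (ha₁ : AdherenceMap sq C M J₁ T h₁) (ha₂ : AdherenceMap sq C M J₂ T h₂)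
    (he₁ : e₁ ∈ J₁.Es) (he₂ : e₂ ∈ J₂.Es) (hh : h₂ e₂ = h₁ e₁) (hS : S.Subsingleton)
    (hc₁ : cxt sq J₁ T h₁ e₁ ⊆ S) (hc₂ : cxt sq J₂ T h₂ e₂ ⊆ S) :
    J₂.src e₂ = J₁.src e₁ ∧ J₂.tgt e₂ = J₁.tgt e₁ := by
  have hsrc (hs : T.src (h₁ e₁) ≠ sq) : J₂.src e₂ = J₁.src e₁ := by
    rw [ha₂.src_eq_of_ne hp₂ he₂ (hh ▸ hs), ha₁.src_eq_of_ne hp₁ he₁ hs, hh]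
  have htgt (ht : T.tgt (h₁ e₁) ≠ sq) : J₂.tgt e₂ = J₁.tgt e₁ := by
    rw [ha₂.tgt_eq_of_ne hp₂ he₂ (hh ▸ ht), ha₁.tgt_eq_of_ne hp₁ he₁ ht, hh]
  by_cases hs : T.src (h₁ e₁) = sq
  · have ht := (hT.src_ne_or_tgt_ne (ha₁ e₁ he₁).1).resolve_left (not_not.2 hs)
    refine ⟨hS (hc₂ ?_) (hc₁ ?_), htgt ht⟩ <;> simp [cxt, hh, hs]
  by_cases ht : T.tgt (h₁ e₁) = sq
  · refine ⟨hsrc hs, hS (hc₂ ?_) (hc₁ ?_)⟩ <;> simp [cxt, hh, hs, ht]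
  · exact ⟨hsrc hs, htgt ht⟩

end Patches

theorem BijCond.congr_left {sq : V} {r : Rule V E L} {J J' : Graph V E L}
    {hL hL' hR : E → E} (hb : BijCond sq r J J' hL hR) (heq : EqOn hL hL' J.Es) :
    BijCond sq r J J' hL' hR := by
  have hpreim (t : E) : preim J.Es hL t = preim J.Es hL' t := by
    ext a
    exact ⟨fun ⟨ha, hat⟩ => ⟨ha, heq ha ▸ hat⟩, fun ⟨ha, hat⟩ => ⟨ha, (heq ha).symm ▸ hat⟩⟩
  intro t ht
  obtain ⟨σ, hσ, hσ'⟩ := hb t ht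
  refine ⟨σ, hpreim _ ▸ hσ, fun e he => ?_⟩
  obtain ⟨hlab, hcxt⟩ := hσ' e he
  refine ⟨hlab, ?_⟩
  rwa [cxt, cxt, ← heq (hσ.mapsTo he).1]

theorem exists_bijOn_of_bijCond {sq : V} {r : Rule V E L} {C J J₁ J₂ : Graph V E L}
    {hL h₁ h₂ : E → E} (hT : IsPatchType sq r.PR r.TR)
    (hp₁ : IsPatch C r.PR J₁) (hp₂ : IsPatch C r.PR J₂)
    (ha₁ : AdherenceMap sq C r.PR J₁ r.TR h₁) (ha₂ : AdherenceMap sq C r.PR J₂ r.TR h₂)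
    (hb₁ : BijCond sq r J J₁ hL h₁) (hb₂ : BijCond sq r J J₂ hL h₂) :
    ∃ τ : E → E, BijOn τ J₁.Es J₂.Es ∧ ∀ e ∈ J₁.Es,
      J₂.src (τ e) = J₁.src e ∧ J₂.tgt (τ e) = J₁.tgt e ∧ J₂.lab (τ e) = J₁.lab e := by
  choose! σ₁ hσ₁ hσ₁' using hb₁
  choose! σ₂ hσ₂ hσ₂' using hb₂
  obtain ⟨τ, hτ, hτσ⟩ := exists_bijOn_of_fiberwise_bijOn
    (fun e he => (ha₁ e he).1) (fun e he => (ha₂ e he).1) hσ₁ hσ₂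
  refine ⟨τ, hτ, fun e he => ?_⟩
  obtain ⟨hh, hσ⟩ := hτσ e he
  have ht := (ha₁ e he).1
  obtain ⟨hlab₁, hcxt₁⟩ := hσ₁' _ ht e ⟨he, rfl⟩
  obtain ⟨hlab₂, hcxt₂⟩ := hσ₂' _ ht (τ e) ⟨hτ.mapsTo he, hh⟩
  rw [hσ] at hlab₂ hcxt₂
  obtain ⟨hsrc, htgt⟩ := endpoints_eq_of_cxt_subset hT hp₁ hp₂ ha₁ ha₂ he (hτ.mapsTo he) hh
    cxt_subsingleton hcxt₁ hcxt₂
  exact ⟨hsrc, htgt, hlab₂.trans hlab₁.symm⟩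

theorem iso_of_edgePerm {G H : Graph V E L} (π : E ≃ E) (hV : G.Vs = H.Vs) (hE : π '' G.Es = H.Es)
    (hattr : ∀ e ∈ G.Es,
      H.src (π e) = G.src e ∧ H.tgt (π e) = G.tgt e ∧ H.lab (π e) = G.lab e) :
    Iso G H := by
  refine ⟨⟨Equiv.refl V, π⟩, by simpa [Renaming.apply] using hV, hE, ?_⟩
  rintro _ ⟨e, he, rfl⟩
  simpa [Renaming.apply, eq_comm] using hattr e he

section Composition

variable {C J J₁ J₂ M : Graph V E L}

theorem comp_Vs (hp : IsPatch C M J) : (comp C J M).Vs = C.Vs ∪ M.Vs := by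
  simp only [comp, Graph.union]
  rw [union_right_comm, union_eq_left.2 hp.vs_subset]

theorem comp_attr_of_mem_patch {e : E} (hp : IsPatch C M J) (he : e ∈ J.Es) :
    (comp C J M).src e = J.src e ∧ (comp C J M).tgt e = J.tgt e ∧
      (comp C J M).lab e = J.lab e := by
  have hC : e ∉ C.Es := fun hC => hp.1.subset ⟨he, .inl hC⟩
  simp [comp, Graph.union, he, hC]

theorem comp_attr_congr {J' : Graph V E L} {e : E} (he : e ∉ J.Es) (he' : e ∉ J'.Es) :
    (comp C J M).src e = (comp C J' M).src e ∧ (comp C J M).tgt e = (comp C J' M).tgt e ∧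
      (comp C J M).lab e = (comp C J' M).lab e := by
  by_cases hC : e ∈ C.Es <;> simp [comp, Graph.union, hC, he, he']

theorem comp_iso_comp_of_bijOn {τ : E → E} (hp₁ : IsPatch C M J₁) (hp₂ : IsPatch C M J₂)
    (hτ : BijOn τ J₁.Es J₂.Es) (hattr : ∀ e ∈ J₁.Es,
      J₂.src (τ e) = J₁.src e ∧ J₂.tgt (τ e) = J₁.tgt e ∧ J₂.lab (τ e) = J₁.lab e) :
    Iso (comp C J₁ M) (comp C J₂ M) := by
  have hdisj₁ : Disjoint J₁.Es (C.Es ∪ M.Es) := disjoint_iff_inter_eq_empty.2 hp₁.1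
  have hdisj₂ : Disjoint J₂.Es (C.Es ∪ M.Es) := disjoint_iff_inter_eq_empty.2 hp₂.1
  obtain ⟨π, hπτ, hπid⟩ := hτ.exists_perm_eqOn J₁.finE (C.finE.union M.finE) hdisj₁ hdisj₂
  refine iso_of_edgePerm π (by rw [comp_Vs hp₁, comp_Vs hp₂]) ?_ ?_
  · simp only [comp, Graph.union, image_union, hπτ.image_eq, hτ.image_eq,
      (hπid.mono subset_union_left).image_eq_self, (hπid.mono subset_union_right).image_eq_self]
  · intro e he
    by_cases hJ : e ∈ J₁.Es
    · obtain ⟨hs₁, ht₁, hl₁⟩ := comp_attr_of_mem_patch hp₁ hJ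
      obtain ⟨hs₂, ht₂, hl₂⟩ := comp_attr_of_mem_patch hp₂ (hτ.mapsTo hJ)
      rw [hπτ hJ, hs₁, ht₁, hl₁, hs₂, ht₂, hl₂]
      exact hattr e hJ
    · have hK : e ∈ C.Es ∪ M.Es := by
        rcases he with (hC | hJ') | hM
        exacts [.inl hC, absurd hJ' hJ, .inr hM]
      rw [hπid hK]
      exact comp_attr_congr (hdisj₂.notMem_of_mem_right hK) hJ

end Composition

theorem rule_determinism_general (sq : V) (r : Rule V E L)
    (hWF : r.WF sq) (hSimple : r.TL.Simple)
    (C J J₁ J₂ : Graph V E L)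
    (h1 : StepVia sq r C J J₁) (h2 : StepVia sq r C J J₂) :
    Iso (comp C J₁ r.PR) (comp C J₂ r.PR) := by
  obtain ⟨hL₁, hR₁, -, hpL, -, hp₁, haL₁, ha₁, hb₁⟩ := h1
  obtain ⟨hL₂, hR₂, -, -, -, hp₂, haL₂, ha₂, hb₂⟩ := h2
  have hL : EqOn hL₂ hL₁ J.Es := haL₂.eqOn_of_simple hpL hSimple haL₁
  obtain ⟨τ, hτ, hattr⟩ :=
    exists_bijOn_of_bijCond hWF.2.1 hp₁ hp₂ ha₁ ha₂ hb₁ (hb₂.congr_left hL)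
  exact comp_iso_comp_of_bijOn hp₁ hp₂ hτ hattr

/-- Rule determinism. If a single (non-quasi) rule of R^≈
(so its left patch type is simple) derives both G →_R C ·_{J₁} P_R and
G →_R C ·_{J₂} P_R, then the results are isomorphic. -/
theorem rule_determinism (sq : V) (R : Set (Rule V E L))
    (r₀ : Rule V E L) (hr₀ : r₀ ∈ R) (r : Rule V E L) (hiso : Rule.Iso sq r₀ r)
    (hWF : r.WF sq) (hSimple : r.TL.Simple)
    (G C J J₁ J₂ : Graph V E L)
    (hG : G.Eq (comp C J r.PL))
    (h1 : StepVia sq r C J J₁) (h2 : StepVia sq r C J J₂) :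
    Iso (comp C J₁ r.PR) (comp C J₂ r.PR) :=
  rule_determinism_general sq r hWF hSimple C J J₁ J₂ h1 h2

end PGR
end

section
/- Construction of J': Given a rule (P_L,T_L) →^τ (P_R,T_R), a patch J for context C and match P_L, and an adherence map h_L : E_J → E_{T_L}, define J' by: for each type edge t = (t_s → t_t) ∈ E_{T_R} and each patch edge j = (j_s →^α j_t) ∈ E_J with h_L(j) = τ(t) = (t_s^τ → t_t^τ): (1) if □ ∉ {t_s, t_t}, add a fresh edge t_s →^α t_t; (2) if t_s = t_s^τ = □, add j_s →^α t_t; (3) if t_t = t_t^τ = □, add t_s →^α j_t; (4) if t_s = □ and t_t^τ = □ (and t_s^τ ≠ □), add j_t →^α t_t; (5) if t_t = □ and t_s^τ = □ (and t_t^τ ≠ □), add t_s →^α j_s. Then J' is a patch for C and P_R, and the map h_R sending each added edge to its generating t ∈ E_{T_R} is an adherence map from J' to T_R satisfying the bijection condition: for every t ∈ E_{T_R}, there is a bijection σ : h_R^{-1}(t) → h_L^{-1}(τ(t)) preserving labels and with cxt_{h_R}(e) ⊆ cxt_{h_L}(σ(e)). -/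
namespace PGR

variable {V E L : Type}

/-- Construction of J'. If J' is constructed by the five-case
procedure (with fresh edges indexed, via p and q, by the pairs of a right type
edge t and a patch edge j with h_L(j) = τ(t)), then J' is a patch for C and P_R
and p is an adherence map to T_R satisfying the bijection condition. -/
theorem construct_J' (sq : V) (r : Rule V E L) (hWF : r.WF sq)
    (C : Graph V E L) (hsqC : sq ∉ C.Vs)
    (hdL : Disj C r.PL) (hdR : Disj C r.PR)
    (J : Graph V E L) (hJ : IsPatch C r.PL J)
    (hL : E → E) (hAdL : AdherenceMap sq C r.PL J r.TL hL)
    (J' : Graph V E L) (p q : E → E)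
    (hfresh : J'.Es ∩ (C.Es ∪ r.PR.Es) = ∅)
    (hVs : J'.Vs = J'.src '' J'.Es ∪ J'.tgt '' J'.Es)
    (hbij : Set.BijOn (fun e => (p e, q e)) J'.Es
      {pt : E × E | pt.1 ∈ r.TR.Es ∧ pt.2 ∈ J.Es ∧ hL pt.2 = r.tr pt.1})
    (hlab : ∀ e ∈ J'.Es, J'.lab e = J.lab (q e))
    (hcase1 : ∀ e ∈ J'.Es, r.TR.src (p e) ≠ sq → r.TR.tgt (p e) ≠ sq →
      J'.src e = r.TR.src (p e) ∧ J'.tgt e = r.TR.tgt (p e))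
    (hcase2 : ∀ e ∈ J'.Es, r.TR.src (p e) = sq → r.TL.src (r.tr (p e)) = sq →
      J'.src e = J.src (q e) ∧ J'.tgt e = r.TR.tgt (p e))
    (hcase3 : ∀ e ∈ J'.Es, r.TR.tgt (p e) = sq → r.TL.tgt (r.tr (p e)) = sq →
      J'.src e = r.TR.src (p e) ∧ J'.tgt e = J.tgt (q e))
    (hcase4 : ∀ e ∈ J'.Es, r.TR.src (p e) = sq →
      r.TL.src (r.tr (p e)) ≠ sq → r.TL.tgt (r.tr (p e)) = sq →
      J'.src e = J.tgt (q e) ∧ J'.tgt e = r.TR.tgt (p e))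
    (hcase5 : ∀ e ∈ J'.Es, r.TR.tgt (p e) = sq →
      r.TL.src (r.tr (p e)) = sq → r.TL.tgt (r.tr (p e)) ≠ sq →
      J'.src e = r.TR.src (p e) ∧ J'.tgt e = J.src (q e)) :
    IsPatch C r.PR J' ∧
    AdherenceMap sq C r.PR J' r.TR p ∧
    BijCond sq r J J' hL p := by
  obtain ⟨⟨hsqPL, _, _, hTLend⟩, ⟨hsqPR, _, _, hTRend⟩, htr⟩ := hWF
  obtain ⟨hJdisj, hJVs, hJend⟩ := hJ
  -- disjointness of vertex sets
  have hCPR : ∀ x, x ∈ r.PR.Vs → x ∉ C.Vs := by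
    intro x hx hc
    have : x ∈ C.Vs ∩ r.PR.Vs := ⟨hc, hx⟩
    rw [hdR.1] at this; exact this
  -- endpoints of TL edges
  have hTL1 : ∀ t ∈ r.TL.Es, r.TL.src t ≠ sq → r.TL.src t ∈ r.PL.Vs := by
    intro t ht hne
    rcases hTLend t ht with h | h | h
    · exact absurd h.1 hne
    · exact h.1
    · exact h.1
  have hTL2 : ∀ t ∈ r.TL.Es, r.TL.tgt t ≠ sq → r.TL.tgt t ∈ r.PL.Vs := by
    intro t ht hne
    rcases hTLend t ht with h | h | h
    · exact h.2
    · exact absurd h.2 hne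
    · exact h.2
  -- endpoints of TR edges
  have hTR1 : ∀ t ∈ r.TR.Es, r.TR.src t ≠ sq → r.TR.src t ∈ r.PR.Vs := by
    intro t ht hne
    rcases hTRend t ht with h | h | h
    · exact absurd h.1 hne
    · exact h.1
    · exact h.1
  have hTR2 : ∀ t ∈ r.TR.Es, r.TR.tgt t ≠ sq → r.TR.tgt t ∈ r.PR.Vs := by
    intro t ht hne
    rcases hTRend t ht with h | h | h
    · exact h.2
    · exact absurd h.2 hne
    · exact h.2
  -- a TR edge cannot have both endpoints sq
  have hTRnb : ∀ t ∈ r.TR.Es, ¬(r.TR.src t = sq ∧ r.TR.tgt t = sq) := by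
    rintro t ht ⟨h1, h2⟩
    rcases hTRend t ht with h | h | h
    · exact hsqPR (h2 ▸ h.2)
    · exact hsqPR (h1 ▸ h.1)
    · exact hsqPR (h1 ▸ h.1)
  -- a TL edge cannot have both endpoints sq
  have hTLnb : ∀ t ∈ r.TL.Es, ¬(r.TL.src t = sq ∧ r.TL.tgt t = sq) := by
    rintro t ht ⟨h1, h2⟩
    rcases hTLend t ht with h | h | h
    · exact hsqPL (h2 ▸ h.2)
    · exact hsqPL (h1 ▸ h.1)
    · exact hsqPL (h1 ▸ h.1)
  -- a J edge whose TL image has src = sq has its source in C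
  have hJsrcC : ∀ j ∈ J.Es, r.TL.src (hL j) = sq → J.src j ∈ C.Vs := by
    intro j hj hsq
    rcases hJend j hj with h | h | h
    · exact h.1
    · have h2 := (hAdL j hj).2.2.1 h.1
      have : sq ∈ r.PL.Vs := by rw [← hsq, h2]; exact h.1
      exact absurd this hsqPL
    · have h2 := (hAdL j hj).2.2.1 h.1
      have : sq ∈ r.PL.Vs := by rw [← hsq, h2]; exact h.1
      exact absurd this hsqPL
  have hJtgtC : ∀ j ∈ J.Es, r.TL.tgt (hL j) = sq → J.tgt j ∈ C.Vs := by
    intro j hj hsq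
    rcases hJend j hj with h | h | h
    · have h2 := (hAdL j hj).2.2.2.2 h.2
      have : sq ∈ r.PL.Vs := by rw [← hsq, h2]; exact h.2
      exact absurd this hsqPL
    · exact h.2
    · have h2 := (hAdL j hj).2.2.2.2 h.2
      have : sq ∈ r.PL.Vs := by rw [← hsq, h2]; exact h.2
      exact absurd this hsqPL
  -- the key endpoint lemma for J'
  have key : ∀ e ∈ J'.Es,
      ((J'.src e ∈ C.Vs ∧ r.TR.src (p e) = sq) ∨
        (J'.src e ∈ r.PR.Vs ∧ r.TR.src (p e) = J'.src e)) ∧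
      ((J'.tgt e ∈ C.Vs ∧ r.TR.tgt (p e) = sq) ∨
        (J'.tgt e ∈ r.PR.Vs ∧ r.TR.tgt (p e) = J'.tgt e)) := by
    intro e he
    obtain ⟨hpe, hqe, hLq⟩ := hbij.mapsTo he
    have htrc := htr (p e) hpe
    by_cases hs : r.TR.src (p e) = sq
    · have ht : r.TR.tgt (p e) ≠ sq := fun h => hTRnb _ hpe ⟨hs, h⟩
      have htPR : r.TR.tgt (p e) ∈ r.PR.Vs := hTR2 _ hpe ht
      by_cases hls : r.TL.src (r.tr (p e)) = sq
      · obtain ⟨he1, he2⟩ := hcase2 e he hs hls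
        refine ⟨Or.inl ⟨?_, hs⟩, Or.inr ⟨he2 ▸ htPR, he2.symm⟩⟩
        rw [he1]; exact hJsrcC _ hqe (hLq ▸ hls)
      · have hlt : r.TL.tgt (r.tr (p e)) = sq := by
          rcases htrc.2 (Or.inl hs) with h | h
          · exact absurd h hls
          · exact h
        obtain ⟨he1, he2⟩ := hcase4 e he hs hls hlt
        refine ⟨Or.inl ⟨?_, hs⟩, Or.inr ⟨he2 ▸ htPR, he2.symm⟩⟩
        rw [he1]; exact hJtgtC _ hqe (hLq ▸ hlt)
    · have hsPR : r.TR.src (p e) ∈ r.PR.Vs := hTR1 _ hpe hs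
      by_cases ht : r.TR.tgt (p e) = sq
      · by_cases hlt : r.TL.tgt (r.tr (p e)) = sq
        · obtain ⟨he1, he2⟩ := hcase3 e he ht hlt
          refine ⟨Or.inr ⟨he1 ▸ hsPR, he1.symm⟩, Or.inl ⟨?_, ht⟩⟩
          rw [he2]; exact hJtgtC _ hqe (hLq ▸ hlt)
        · have hls : r.TL.src (r.tr (p e)) = sq := by
            rcases htrc.2 (Or.inr ht) with h | h
            · exact h
            · exact absurd h hlt
          obtain ⟨he1, he2⟩ := hcase5 e he ht hls hlt
          refine ⟨Or.inr ⟨he1 ▸ hsPR, he1.symm⟩, Or.inl ⟨?_, ht⟩⟩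
          rw [he2]; exact hJsrcC _ hqe (hLq ▸ hls)
      · have htPR : r.TR.tgt (p e) ∈ r.PR.Vs := hTR2 _ hpe ht
        obtain ⟨he1, he2⟩ := hcase1 e he hs ht
        exact ⟨Or.inr ⟨he1 ▸ hsPR, he1.symm⟩, Or.inr ⟨he2 ▸ htPR, he2.symm⟩⟩
  refine ⟨⟨hfresh, hVs, ?_⟩, ?_, ?_⟩
  · -- endpoint condition of IsPatch
    intro e he
    obtain ⟨hpe, _, _⟩ := hbij.mapsTo he
    obtain ⟨h1, h2⟩ := key e he
    rcases h1 with ⟨hc1, hq1⟩ | ⟨hp1, _⟩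
    · rcases h2 with ⟨_, hq2⟩ | ⟨hp2, _⟩
      · exact absurd ⟨hq1, hq2⟩ (hTRnb _ hpe)
      · exact Or.inl ⟨hc1, hp2⟩
    · rcases h2 with ⟨hc2, _⟩ | ⟨hp2, _⟩
      · exact Or.inr (Or.inl ⟨hp1, hc2⟩)
      · exact Or.inr (Or.inr ⟨hp1, hp2⟩)
  · -- adherence map
    intro e he
    obtain ⟨hpe, _, _⟩ := hbij.mapsTo he
    obtain ⟨h1, h2⟩ := key e he
    refine ⟨hpe, ?_, ?_, ?_, ?_⟩
    · intro hc
      rcases h1 with ⟨_, hq⟩ | ⟨hp, _⟩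
      · exact hq
      · exact absurd hc (hCPR _ hp)
    · intro hp
      rcases h1 with ⟨hc, _⟩ | ⟨_, hq⟩
      · exact absurd hc (hCPR _ hp)
      · exact hq
    · intro hc
      rcases h2 with ⟨_, hq⟩ | ⟨hp, _⟩
      · exact hq
      · exact absurd hc (hCPR _ hp)
    · intro hp
      rcases h2 with ⟨hc, _⟩ | ⟨_, hq⟩
      · exact absurd hc (hCPR _ hp)
      · exact hq
  · -- bijection condition, with σ = q
    intro t ht
    refine ⟨q, ⟨?_, ?_, ?_⟩, ?_⟩
    · rintro e ⟨he, hpe⟩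
      obtain ⟨_, hqe, hLq⟩ := hbij.mapsTo he
      dsimp only at hqe hLq
      exact ⟨hqe, by rw [hLq, hpe]⟩
    · rintro e ⟨he, hpe⟩ e' ⟨he', hpe'⟩ hqq
      exact hbij.injOn he he' (by simp [hpe, hpe', hqq])
    · rintro j ⟨hj, hLj⟩
      obtain ⟨e, he, hee⟩ := hbij.surjOn (a := (t, j)) ⟨ht, hj, hLj⟩
      have hp1 : p e = t := congrArg Prod.fst hee
      have hq1 : q e = j := congrArg Prod.snd hee
      exact ⟨e, ⟨he, hp1⟩, hq1⟩
    · rintro e ⟨he, hpe⟩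
      refine ⟨hlab e he, ?_⟩
      obtain ⟨hpe', hqe, hLq⟩ := hbij.mapsTo he
      dsimp only at hpe' hqe hLq
      have htrc := htr (p e) hpe'
      unfold cxt
      by_cases hs : r.TR.src (p e) = sq
      · rw [if_pos hs]
        by_cases hls : r.TL.src (r.tr (p e)) = sq
        · rw [hLq, if_pos hls, (hcase2 e he hs hls).1]
        · have hlt : r.TL.tgt (r.tr (p e)) = sq := by
            rcases htrc.2 (Or.inl hs) with h | h
            · exact absurd h hls
            · exact h
          rw [hLq, if_neg hls, if_pos hlt, (hcase4 e he hs hls hlt).1]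
      · rw [if_neg hs]
        by_cases ht' : r.TR.tgt (p e) = sq
        · rw [if_pos ht']
          by_cases hls : r.TL.src (r.tr (p e)) = sq
          · have hlt : r.TL.tgt (r.tr (p e)) ≠ sq :=
              fun h => hTLnb _ (htrc.1) ⟨hls, h⟩
            rw [hLq, if_pos hls, (hcase5 e he ht' hls hlt).2]
          · have hlt : r.TL.tgt (r.tr (p e)) = sq := by
              rcases htrc.2 (Or.inr ht') with h | h
              · exact absurd h hls
              · exact h
            rw [hLq, if_neg hls, if_pos hlt, (hcase3 e he ht' hlt).2]
        · rw [if_neg ht']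
          exact Set.empty_subset _

end PGR
end

section
/- The rewrite relation generated by a quasi patch graph rewrite system is closed under isomorphism: if G →_R H, G ≈ G', and the renamings witnessing the isomorphisms can be applied, then there exists H' ≈ H with G' →_R H'. -/
namespace PGR

variable {V E L : Type}

/-!
A renaming `φ` fixing `□` transports every ingredient of a rewrite step `G →_R H`: the context
and both patches are renamed, the rule `r` is replaced by its renamed copy (still isomorphic to
the rule of `R` that `r` is a copy of, because `φ` fixes `□`), and the adherence maps and the
fiberwise bijections are conjugated by `φ`. Hence `φ G →_R φ H`, and `H' := φ H` works.
-/

namespace Graph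

theorem Eq.refl (G : Graph V E L) : G.Eq G := ⟨rfl, rfl, fun _ _ => ⟨rfl, rfl, rfl⟩⟩

theorem Eq.symm {G H : Graph V E L} (h : G.Eq H) : H.Eq G := by
  obtain ⟨hV, hE, hf⟩ := h
  refine ⟨hV.symm, hE.symm, fun e he => ?_⟩
  obtain ⟨hs, ht, hl⟩ := hf e (hE ▸ he)
  exact ⟨hs.symm, ht.symm, hl.symm⟩

theorem Eq.trans {G H K : Graph V E L} (h : G.Eq H) (h' : H.Eq K) : G.Eq K := by
  obtain ⟨hV, hE, hf⟩ := h
  obtain ⟨hV', hE', hf'⟩ := h'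
  refine ⟨hV.trans hV', hE.trans hE', fun e he => ?_⟩
  obtain ⟨hs, ht, hl⟩ := hf e he
  obtain ⟨hs', ht', hl'⟩ := hf' e (hE ▸ he)
  exact ⟨hs.trans hs', ht.trans ht', hl.trans hl'⟩

theorem ext {G H : Graph V E L} (hV : G.Vs = H.Vs) (hE : G.Es = H.Es)
    (hs : G.src = H.src) (ht : G.tgt = H.tgt) (hl : G.lab = H.lab) : G = H := by
  cases G; cases H
  subst hV hE hs ht hl
  rfl

end Graph

namespace Renaming

variable (φ : Renaming V E)

def trans (ψ : Renaming V E) : Renaming V E := ⟨φ.rV.trans ψ.rV, φ.rE.trans ψ.rE⟩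

def conj (h : E → E) : E → E := fun e => φ.rE (h (φ.rE.symm e))

@[simp]
theorem conj_rE (h : E → E) (e : E) : φ.conj h (φ.rE e) = φ.rE (h e) := by
  simp [conj]

section apply

variable {L : Type} (G : Graph V E L)

@[simp] theorem apply_Vs : (φ.apply G).Vs = φ.rV '' G.Vs := rfl

@[simp] theorem apply_Es : (φ.apply G).Es = φ.rE '' G.Es := rfl

@[simp] theorem apply_src_rE (e : E) : (φ.apply G).src (φ.rE e) = φ.rV (G.src e) := by
  simp [apply]

@[simp] theorem apply_tgt_rE (e : E) : (φ.apply G).tgt (φ.rE e) = φ.rV (G.tgt e) := by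
  simp [apply]

@[simp] theorem apply_lab_rE (e : E) : (φ.apply G).lab (φ.rE e) = G.lab e := by
  simp [apply]

theorem apply_trans (ψ : Renaming V E) : (φ.trans ψ).apply G = ψ.apply (φ.apply G) := by
  refine Graph.ext ?_ ?_ ?_ ?_ ?_ <;> simp [trans, apply, Set.image_image]

theorem apply_union (H : Graph V E L) :
    φ.apply (G.union H) = (φ.apply G).union (φ.apply H) := by
  refine Graph.ext ?_ ?_ ?_ ?_ ?_
  · simp [apply, Graph.union, Set.image_union]
  · simp [apply, Graph.union, Set.image_union]
  all_goals
    funext e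
    by_cases hc : φ.rE.symm e ∈ G.Es <;> simp [apply, Graph.union, hc, Set.mem_image_equiv]

theorem apply_comp (J M : Graph V E L) :
    φ.apply (comp G J M) = comp (φ.apply G) (φ.apply J) (φ.apply M) := by
  rw [comp, comp, apply_union, apply_union]

end apply

theorem preim_conj (S : Set E) (h : E → E) (t : E) :
    preim (φ.rE '' S) (φ.conj h) (φ.rE t) = φ.rE '' preim S h t := by
  ext e
  simp [preim, conj, Set.mem_image_equiv]

theorem bijOn_conj {σ : E → E} {A B : Set E} (h : Set.BijOn σ A B) :
    Set.BijOn (φ.conj σ) (φ.rE '' A) (φ.rE '' B) := by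
  have hA : Set.BijOn φ.rE.symm (φ.rE '' A) A := by
    simpa [Equiv.symm_image_image] using
      φ.rE.symm.injective.bijOn_image (s := φ.rE '' A)
  exact φ.rE.injective.bijOn_image.comp (h.comp hA)

end Renaming

theorem Graph.Eq.apply (φ : Renaming V E) {G H : Graph V E L} (h : G.Eq H) :
    (φ.apply G).Eq (φ.apply H) := by
  obtain ⟨hV, hE, hf⟩ := h
  refine ⟨by rw [Renaming.apply_Vs, Renaming.apply_Vs, hV],
    by rw [Renaming.apply_Es, Renaming.apply_Es, hE], Set.forall_mem_image.2 fun e he => ?_⟩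
  obtain ⟨hs, ht, hl⟩ := hf e he
  simp [hs, ht, hl]

def Rule.map (φ : Renaming V E) (r : Rule V E L) : Rule V E L where
  PL := φ.apply r.PL
  TL := φ.apply r.TL
  PR := φ.apply r.PR
  TR := φ.apply r.TR
  tr := φ.conj r.tr

section transport

variable {L₁ L₂ L₃ : Type} (φ : Renaming V E)

theorem Disj.apply {G : Graph V E L₁} {H : Graph V E L₂} (h : Disj G H) :
    Disj (φ.apply G) (φ.apply H) := by
  obtain ⟨hV, hE⟩ := h
  simp only [Disj, Renaming.apply_Vs, Renaming.apply_Es, ← Set.image_inter φ.rV.injective,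
    ← Set.image_inter φ.rE.injective, hV, hE, Set.image_empty, and_self]

theorem IsPatch.apply {C : Graph V E L₁} {M : Graph V E L₂} {J : Graph V E L₃}
    (h : IsPatch C M J) : IsPatch (φ.apply C) (φ.apply M) (φ.apply J) := by
  obtain ⟨hE, hV, hends⟩ := h
  refine ⟨?_, ?_, Set.forall_mem_image.2 fun e he => ?_⟩
  · simp only [Renaming.apply_Es, ← Set.image_union, ← Set.image_inter φ.rE.injective, hE,
      Set.image_empty]
  · simp only [Renaming.apply_Vs, Renaming.apply_Es, Set.image_image, Renaming.apply_src_rE,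
      Renaming.apply_tgt_rE, hV, Set.image_union]
  · simpa only [Renaming.apply_src_rE, Renaming.apply_tgt_rE, Renaming.apply_Vs,
      φ.rV.injective.mem_set_image] using hends e he

variable {sq : V} {φ} (hφ : φ.rV sq = sq)
include hφ

theorem Renaming.rV_eq_sq_iff (x : V) : φ.rV x = sq ↔ x = sq := by
  rw [← hφ, φ.rV.apply_eq_iff_eq, hφ]

theorem AdheresEdge.apply {C : Graph V E L₁} {M : Graph V E L₂} {J : Graph V E L₃}
    {T : Graph V E Unit} {j t : E} (h : AdheresEdge sq C M J T j t) :
    AdheresEdge sq (φ.apply C) (φ.apply M) (φ.apply J) (φ.apply T) (φ.rE j) (φ.rE t) := by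
  simpa only [AdheresEdge, Renaming.apply_src_rE, Renaming.apply_tgt_rE, Renaming.apply_Vs,
    φ.rV.injective.mem_set_image, Renaming.rV_eq_sq_iff hφ, φ.rV.apply_eq_iff_eq] using h

theorem AdherenceMap.apply {C : Graph V E L₁} {M : Graph V E L₂} {J : Graph V E L₃}
    {T : Graph V E Unit} {h : E → E} (ha : AdherenceMap sq C M J T h) :
    AdherenceMap sq (φ.apply C) (φ.apply M) (φ.apply J) (φ.apply T) (φ.conj h) :=
  Set.forall_mem_image.2 fun j hj => by
    rw [Renaming.conj_rE]
    exact ⟨Set.mem_image_of_mem _ (ha j hj).1, (ha j hj).2.apply hφ⟩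

theorem cxt_apply (J : Graph V E L₃) (T : Graph V E Unit) (h : E → E) (e : E) :
    cxt sq (φ.apply J) (φ.apply T) (φ.conj h) (φ.rE e) = φ.rV '' cxt sq J T h e := by
  unfold cxt
  rw [Renaming.conj_rE, Renaming.apply_src_rE, Renaming.apply_tgt_rE,
    Renaming.rV_eq_sq_iff hφ, Renaming.rV_eq_sq_iff hφ]
  split_ifs <;> simp

theorem Rule.Iso.map {r₀ r : Rule V E L} (h : Rule.Iso sq r₀ r) : Rule.Iso sq r₀ (r.map φ) := by
  obtain ⟨ψ, hψ, hPL, hTL, hPR, hTR, htr⟩ := h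
  refine ⟨ψ.trans φ, by simp [Renaming.trans, hψ, hφ], ?_, ?_, ?_, ?_, fun e he => ?_⟩
  all_goals simp only [Renaming.apply_trans, Rule.map]
  · exact hPL.apply φ
  · exact hTL.apply φ
  · exact hPR.apply φ
  · exact hTR.apply φ
  · simp [Renaming.trans, htr e he]

theorem BijCond.map {r : Rule V E L} {J J' : Graph V E L} {hL hR : E → E}
    (h : BijCond sq r J J' hL hR) :
    BijCond sq (r.map φ) (φ.apply J) (φ.apply J') (φ.conj hL) (φ.conj hR) := by
  refine Set.forall_mem_image.2 fun t ht => ?_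
  obtain ⟨σ, hσ, hlab⟩ := h t ht
  refine ⟨φ.conj σ, ?_, ?_⟩
  · simpa only [Renaming.apply_Es, Rule.map, Renaming.conj_rE, Renaming.preim_conj]
      using φ.bijOn_conj hσ
  · simp only [Renaming.apply_Es, Renaming.preim_conj, Rule.map]
    refine Set.forall_mem_image.2 fun e he => ?_
    obtain ⟨hl, hc⟩ := hlab e he
    simp only [Renaming.conj_rE, Renaming.apply_lab_rE, cxt_apply hφ]
    exact ⟨hl, Set.image_mono hc⟩

theorem StepVia.map {r : Rule V E L} {C J J' : Graph V E L} (h : StepVia sq r C J J') :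
    StepVia sq (r.map φ) (φ.apply C) (φ.apply J) (φ.apply J') := by
  obtain ⟨hL, hR, hdL, hpL, hdR, hpR, haL, haR, hbij⟩ := h
  exact ⟨φ.conj hL, φ.conj hR, hdL.apply φ, hpL.apply φ, hdR.apply φ, hpR.apply φ,
    haL.apply hφ, haR.apply hφ, hbij.map hφ⟩

theorem Step.apply {R : Set (Rule V E L)} {G H : Graph V E L} (h : Step sq R G H) :
    Step sq R (φ.apply G) (φ.apply H) := by
  obtain ⟨r₀, hr₀, r, hiso, C, J, J', hstep, hG, hH⟩ := h
  refine ⟨r₀, hr₀, r.map φ, hiso.map hφ, φ.apply C, φ.apply J, φ.apply J', hstep.map hφ, ?_, ?_⟩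
  · simpa only [Rule.map, Renaming.apply_comp] using hG.apply φ
  · simpa only [Rule.map, Renaming.apply_comp] using hH.apply φ

end transport

theorem Step.of_eq_left {sq : V} {R : Set (Rule V E L)} {G G' H : Graph V E L}
    (h : Step sq R G H) (hG : G.Eq G') : Step sq R G' H := by
  obtain ⟨r₀, hr₀, r, hiso, C, J, J', hstep, hGC, hH⟩ := h
  exact ⟨r₀, hr₀, r, hiso, C, J, J', hstep, hG.symm.trans hGC, hH⟩

theorem step_closed_under_iso_general (sq : V) (R : Set (Rule V E L))
    (G H G' : Graph V E L) (φ : Renaming V E) (hφ : φ.rV sq = sq)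
    (hGG' : (φ.apply G).Eq G') (hstep : Step sq R G H) :
    ∃ H' : Graph V E L, Iso H H' ∧ Step sq R G' H' :=
  ⟨φ.apply H, ⟨φ, .refl _⟩, (hstep.apply hφ).of_eq_left hGG'⟩

/-- The rewrite relation is closed under isomorphism: if
G →_R H and G ≈ G' via a renaming that can be applied (it fixes □), then
there is H' ≈ H with G' →_R H'. -/
theorem step_closed_under_iso (sq : V) (R : Set (Rule V E L))
    (hRwf : ∀ r ∈ R, r.WF sq)
    (G H G' : Graph V E L) (φ : Renaming V E) (hφ : φ.rV sq = sq)
    (hGG' : (φ.apply G).Eq G') (hstep : Step sq R G H) :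
    ∃ H' : Graph V E L, Iso H H' ∧ Step sq R G' H' :=
  step_closed_under_iso_general sq R G H G' φ hφ hGG' hstep

end PGR
end

section
/- Checking for a redex is characterized by: a graph G contains a redex with respect to rule (P_L, T_L) →^τ (P_R, T_R) if and only if (1) there exists a subgraph M of G isomorphic to P_L, and (2) every edge e of G not in E_M but incident to a vertex of M adheres (after transporting along the isomorphism) to an edge of T_L. Equivalently, G can be written as C ·_J P_L' with P_L' ≈ P_L and J adhering to the transported T_L. -/
namespace PGR

variable {V E L : Type}

lemma Graph.union_src_of_mem (G H : Graph V E L) {e : E} (h : e ∈ G.Es) :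
    (G.union H).src e = G.src e := by simp only [Graph.union]; rw [if_pos h]

lemma Graph.union_src_of_not_mem (G H : Graph V E L) {e : E} (h : e ∉ G.Es) :
    (G.union H).src e = H.src e := by simp only [Graph.union]; rw [if_neg h]

lemma Graph.union_tgt_of_mem (G H : Graph V E L) {e : E} (h : e ∈ G.Es) :
    (G.union H).tgt e = G.tgt e := by simp only [Graph.union]; rw [if_pos h]

lemma Graph.union_tgt_of_not_mem (G H : Graph V E L) {e : E} (h : e ∉ G.Es) :
    (G.union H).tgt e = H.tgt e := by simp only [Graph.union]; rw [if_neg h]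

lemma Graph.union_lab_of_mem (G H : Graph V E L) {e : E} (h : e ∈ G.Es) :
    (G.union H).lab e = G.lab e := by simp only [Graph.union]; rw [if_pos h]

lemma Graph.union_lab_of_not_mem (G H : Graph V E L) {e : E} (h : e ∉ G.Es) :
    (G.union H).lab e = H.lab e := by simp only [Graph.union]; rw [if_neg h]

/-- Redex characterization. G contains a redex for the rule iff
(1) some subgraph M of G is isomorphic to P_L and (2) every edge of G outside
M incident to a vertex of M adheres (after transport) to an edge of T_L;
equivalently, G decomposes as C ·_J P_L' with P_L' ≈ P_L and J adhering to
the transported T_L. -/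
theorem redex_characterization (sq : V) (r : Rule V E L) (hWF : r.WF sq)
    (G : Graph V E L) (hG : G.WF) (hsq : sq ∉ G.Vs) :
    (∃ (M : Graph V E L) (φ : Renaming V E), φ.rV sq = sq ∧
        Subgraph M G ∧ (φ.apply r.PL).Eq M ∧
        ∀ e ∈ G.Es, e ∉ M.Es → (G.src e ∈ M.Vs ∨ G.tgt e ∈ M.Vs) →
          ∃ t ∈ (φ.apply r.TL).Es,
            (G.src e ∉ M.Vs → (φ.apply r.TL).src t = sq) ∧
            (G.src e ∈ M.Vs → (φ.apply r.TL).src t = G.src e) ∧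
            (G.tgt e ∉ M.Vs → (φ.apply r.TL).tgt t = sq) ∧
            (G.tgt e ∈ M.Vs → (φ.apply r.TL).tgt t = G.tgt e))
    ↔
    (∃ (C J PL' : Graph V E L) (φ : Renaming V E) (h : E → E),
        φ.rV sq = sq ∧ (φ.apply r.PL).Eq PL' ∧ C.WF ∧
        Disj C PL' ∧ IsPatch C PL' J ∧ G.Eq (comp C J PL') ∧
        AdherenceMap sq C PL' J (φ.apply r.TL) h) := by
  classical
  constructor
  · rintro ⟨M, φ, hφ, ⟨hMV, hME, hMf⟩, hIso, hbd⟩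
    -- boundary edges
    set JE : Set E := {e | e ∈ G.Es ∧ e ∉ M.Es ∧ (G.src e ∈ M.Vs ∨ G.tgt e ∈ M.Vs)}
      with hJEdef
    have hJEsub : JE ⊆ G.Es := fun e he => he.1
    have hCEsub : {e | e ∈ G.Es ∧ e ∉ M.Es ∧ G.src e ∉ M.Vs ∧ G.tgt e ∉ M.Vs} ⊆ G.Es :=
      fun e he => he.1
    set C : Graph V E L :=
      { Vs := G.Vs \ M.Vs
        Es := {e | e ∈ G.Es ∧ e ∉ M.Es ∧ G.src e ∉ M.Vs ∧ G.tgt e ∉ M.Vs}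
        finV := G.finV.subset Set.diff_subset
        finE := G.finE.subset hCEsub
        src := G.src, tgt := G.tgt, lab := G.lab } with hCdef
    set J : Graph V E L :=
      { Vs := G.src '' JE ∪ G.tgt '' JE
        Es := JE
        finV := ((G.finE.subset hJEsub).image _).union ((G.finE.subset hJEsub).image _)
        finE := G.finE.subset hJEsub
        src := G.src, tgt := G.tgt, lab := G.lab } with hJdef
    have hch : ∀ e ∈ JE, ∃ t, t ∈ (φ.apply r.TL).Es ∧
        (G.src e ∉ M.Vs → (φ.apply r.TL).src t = sq) ∧
        (G.src e ∈ M.Vs → (φ.apply r.TL).src t = G.src e) ∧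
        (G.tgt e ∉ M.Vs → (φ.apply r.TL).tgt t = sq) ∧
        (G.tgt e ∈ M.Vs → (φ.apply r.TL).tgt t = G.tgt e) := by
      intro e he
      obtain ⟨t, ht, h1, h2, h3, h4⟩ := hbd e he.1 he.2.1 he.2.2
      exact ⟨t, ht, h1, h2, h3, h4⟩
    refine ⟨C, J, M, φ, fun e => if hc : e ∈ JE then (hch e hc).choose else e,
      hφ, hIso, ?_, ?_, ?_, ?_, ?_⟩
    · -- C.WF
      intro e he
      refine ⟨⟨(hG e he.1).1, he.2.2.1⟩, ⟨(hG e he.1).2, he.2.2.2⟩⟩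
    · -- Disj C M
      constructor
      · ext v; simp only [hCdef, Set.mem_inter_iff, Set.mem_diff, Set.mem_empty_iff_false,
          iff_false, not_and]
        rintro ⟨_, hv⟩ hv'; exact hv hv'
      · ext e; simp only [hCdef, Set.mem_inter_iff, Set.mem_setOf_eq,
          Set.mem_empty_iff_false, iff_false, not_and]
        rintro ⟨_, he, _⟩ he'; exact (he he').elim
    · -- IsPatch C M J
      refine ⟨?_, rfl, ?_⟩
      · ext e
        simp only [hJdef, hCdef, Set.mem_inter_iff, Set.mem_union, Set.mem_setOf_eq,
          Set.mem_empty_iff_false, iff_false, not_and]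
        rintro ⟨_, heM, hinc⟩ (⟨_, _, hs, ht⟩ | hM)
        · rcases hinc with h | h
          · exact hs h
          · exact ht h
        · exact heM hM
      · intro e he
        have hs : G.src e ∈ G.Vs := (hG e he.1).1
        have ht : G.tgt e ∈ G.Vs := (hG e he.1).2
        rcases he.2.2 with h | h
        · by_cases h2 : G.tgt e ∈ M.Vs
          · exact Or.inr (Or.inr ⟨h, h2⟩)
          · exact Or.inr (Or.inl ⟨h, ⟨ht, h2⟩⟩)
        · by_cases h2 : G.src e ∈ M.Vs
          · exact Or.inr (Or.inr ⟨h2, h⟩)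
          · exact Or.inl ⟨⟨hs, h2⟩, h⟩
    · -- G.Eq (comp C J M)
      have hEs : ((C.union J).union M).Es = G.Es := by
        ext e
        simp only [Graph.union, hCdef, hJdef, Set.mem_union, Set.mem_setOf_eq, hJEdef]
        constructor
        · rintro ((⟨h, _⟩ | ⟨h, _⟩) | h)
          · exact h
          · exact h
          · exact hME h
        · intro h
          by_cases hM : e ∈ M.Es
          · exact Or.inr hM
          · by_cases hb : G.src e ∈ M.Vs ∨ G.tgt e ∈ M.Vs
            · exact Or.inl (Or.inr ⟨h, hM, hb⟩)
            · push_neg at hb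
              exact Or.inl (Or.inl ⟨h, hM, hb.1, hb.2⟩)
      refine ⟨?_, hEs.symm, ?_⟩
      · show G.Vs = (C.Vs ∪ J.Vs) ∪ M.Vs
        apply Set.eq_of_subset_of_subset
        · intro v hv
          by_cases hM : v ∈ M.Vs
          · exact Or.inr hM
          · exact Or.inl (Or.inl ⟨hv, hM⟩)
        · rintro v ((⟨h, _⟩ | h) | h)
          · exact h
          · rcases h with ⟨e, he, rfl⟩ | ⟨e, he, rfl⟩
            · exact (hG e he.1).1
            · exact (hG e he.1).2
          · exact hMV h
      · intro e he
        have hcase : e ∈ (C.Es ∪ J.Es) ∨ (e ∉ C.Es ∪ J.Es ∧ e ∈ M.Es) := by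
          by_cases h : e ∈ C.Es ∪ J.Es
          · exact Or.inl h
          · refine Or.inr ⟨h, ?_⟩
            have hmem : e ∈ (C.Es ∪ J.Es) ∪ M.Es := by
              have : e ∈ ((C.union J).union M).Es := by rw [hEs]; exact he
              exact this
            rcases hmem with h' | h'
            · exact (h h').elim
            · exact h'
        rcases hcase with h | ⟨h, hM⟩
        · have h' : e ∈ (C.union J).Es := h
          rw [show comp C J M = (C.union J).union M from rfl,
            Graph.union_src_of_mem _ _ h', Graph.union_tgt_of_mem _ _ h',
            Graph.union_lab_of_mem _ _ h']
          by_cases hc : e ∈ C.Es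
          · rw [Graph.union_src_of_mem _ _ hc, Graph.union_tgt_of_mem _ _ hc,
              Graph.union_lab_of_mem _ _ hc]
            exact ⟨rfl, rfl, rfl⟩
          · rw [Graph.union_src_of_not_mem _ _ hc, Graph.union_tgt_of_not_mem _ _ hc,
              Graph.union_lab_of_not_mem _ _ hc]
            exact ⟨rfl, rfl, rfl⟩
        · have h' : e ∉ (C.union J).Es := h
          rw [show comp C J M = (C.union J).union M from rfl,
            Graph.union_src_of_not_mem _ _ h', Graph.union_tgt_of_not_mem _ _ h',
            Graph.union_lab_of_not_mem _ _ h']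
          obtain ⟨a, b, c⟩ := hMf e hM
          exact ⟨a.symm, b.symm, c.symm⟩
    · -- AdherenceMap
      intro j hj
      have hj' : j ∈ JE := hj
      simp only [dif_pos hj']
      obtain ⟨ht, h1, h2, h3, h4⟩ := (hch j hj').choose_spec
      refine ⟨ht, ?_, ?_, ?_, ?_⟩
      · intro hc; exact h1 hc.2
      · exact h2
      · intro hc; exact h3 hc.2
      · exact h4
  · rintro ⟨C, J, PL', φ, h, hφ, hIso, hCWF, ⟨hDV, hDE⟩, ⟨hPE, hPV, hPend⟩, hGeq, hAdh⟩
    obtain ⟨hGV, hGE, hGf⟩ := hGeq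
    have hJdisjM : ∀ e ∈ J.Es, e ∉ PL'.Es := by
      intro e he hc
      have : e ∈ J.Es ∩ (C.Es ∪ PL'.Es) := ⟨he, Or.inr hc⟩
      rw [hPE] at this; exact this
    have hJdisjC : ∀ e ∈ J.Es, e ∉ C.Es := by
      intro e he hc
      have : e ∈ J.Es ∩ (C.Es ∪ PL'.Es) := ⟨he, Or.inl hc⟩
      rw [hPE] at this; exact this
    have hCdisjM : ∀ e ∈ C.Es, e ∉ PL'.Es := by
      intro e he hc
      have : e ∈ C.Es ∩ PL'.Es := ⟨he, hc⟩
      rw [hDE] at this; exact this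
    have hEsplit : G.Es = (C.Es ∪ J.Es) ∪ PL'.Es := by
      rw [hGE]; rfl
    have hVsplit : G.Vs = (C.Vs ∪ J.Vs) ∪ PL'.Vs := by
      rw [hGV]; rfl
    -- edge functions on each part
    have hsrcC : ∀ e ∈ C.Es, G.src e = C.src e ∧ G.tgt e = C.tgt e := by
      intro e he
      have heG : e ∈ G.Es := by rw [hEsplit]; exact Or.inl (Or.inl he)
      obtain ⟨h1, h2, _⟩ := hGf e heG
      have h' : e ∈ (C.union J).Es := Set.mem_union_left _ he
      constructor
      · rw [h1, show comp C J PL' = (C.union J).union PL' from rfl,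
          Graph.union_src_of_mem _ _ h', Graph.union_src_of_mem _ _ he]
      · rw [h2, show comp C J PL' = (C.union J).union PL' from rfl,
          Graph.union_tgt_of_mem _ _ h', Graph.union_tgt_of_mem _ _ he]
    have hsrcJ : ∀ e ∈ J.Es, G.src e = J.src e ∧ G.tgt e = J.tgt e := by
      intro e he
      have heG : e ∈ G.Es := by rw [hEsplit]; exact Or.inl (Or.inr he)
      obtain ⟨h1, h2, _⟩ := hGf e heG
      have h' : e ∈ (C.union J).Es := Set.mem_union_right _ he
      constructor
      · rw [h1, show comp C J PL' = (C.union J).union PL' from rfl,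
          Graph.union_src_of_mem _ _ h', Graph.union_src_of_not_mem _ _ (hJdisjC e he)]
      · rw [h2, show comp C J PL' = (C.union J).union PL' from rfl,
          Graph.union_tgt_of_mem _ _ h', Graph.union_tgt_of_not_mem _ _ (hJdisjC e he)]
    have hsrcM : ∀ e ∈ PL'.Es, G.src e = PL'.src e ∧ G.tgt e = PL'.tgt e ∧
        G.lab e = PL'.lab e := by
      intro e he
      have heG : e ∈ G.Es := by rw [hEsplit]; exact Or.inr he
      obtain ⟨h1, h2, h3⟩ := hGf e heG
      have hnot : e ∉ C.Es ∪ J.Es := by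
        rintro (hc | hc)
        · exact hCdisjM e hc he
        · exact hJdisjM e hc he
      have hn : e ∉ (C.union J).Es := hnot
      refine ⟨?_, ?_, ?_⟩
      · rw [h1, show comp C J PL' = (C.union J).union PL' from rfl,
          Graph.union_src_of_not_mem _ _ hn]
      · rw [h2, show comp C J PL' = (C.union J).union PL' from rfl,
          Graph.union_tgt_of_not_mem _ _ hn]
      · rw [h3, show comp C J PL' = (C.union J).union PL' from rfl,
          Graph.union_lab_of_not_mem _ _ hn]
    have hCVnotM : ∀ v ∈ C.Vs, v ∉ PL'.Vs := by
      intro v hv hc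
      have : v ∈ C.Vs ∩ PL'.Vs := ⟨hv, hc⟩
      rw [hDV] at this; exact this
    refine ⟨PL', φ, hφ, ⟨?_, ?_, ?_⟩, hIso, ?_⟩
    · intro v hv; rw [hVsplit]; exact Or.inr hv
    · intro e he; rw [hEsplit]; exact Or.inr he
    · intro e he
      obtain ⟨h1, h2, h3⟩ := hsrcM e he
      exact ⟨h1.symm, h2.symm, h3.symm⟩
    · intro e heG heM hinc
      have heCJ : e ∈ C.Es ∪ J.Es := by
        rw [hEsplit] at heG
        rcases heG with h' | h'
        · exact h'
        · exact (heM h').elim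
      have heJ : e ∈ J.Es := by
        rcases heCJ with hc | hj
        · exfalso
          obtain ⟨h1, h2⟩ := hsrcC e hc
          obtain ⟨hv1, hv2⟩ := hCWF e hc
          rcases hinc with hi | hi
          · rw [h1] at hi; exact hCVnotM _ hv1 hi
          · rw [h2] at hi; exact hCVnotM _ hv2 hi
        · exact hj
      obtain ⟨hs, ht⟩ := hsrcJ e heJ
      obtain ⟨hhe, a1, a2, a3, a4⟩ := hAdh e heJ
      have hendp := hPend e heJ
      refine ⟨h e, hhe, ?_, ?_, ?_, ?_⟩
      · intro hns
        rw [hs] at hns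
        have : J.src e ∈ C.Vs := by
          rcases hendp with ⟨h', _⟩ | ⟨h', _⟩ | ⟨h', _⟩
          · exact h'
          · exact (hns h').elim
          · exact (hns h').elim
        exact a1 this
      · intro hms; rw [hs] at hms ⊢; exact a2 hms
      · intro hnt
        rw [ht] at hnt
        have : J.tgt e ∈ C.Vs := by
          rcases hendp with ⟨_, h'⟩ | ⟨_, h'⟩ | ⟨_, h'⟩
          · exact (hnt h').elim
          · exact h'
          · exact (hnt h').elim
        exact a3 this
      · intro hmt; rw [ht] at hmt ⊢; exact a4 hmt

end PGR
end
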